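/- Let Σ ∈ ℝ^{d×d} be symmetric positive definite, let μ_1,…,μ_C ∈ ℝ^d be distinct, define ρ_{ij}² = ‖μ_i−μ_j‖²_{Σ⁻¹}, ρ_* = min_{i≠j} ρ_{ij} > 0, and for fixed i let Δ_{ij}(x) = ‖x−μ_j‖²_{Σ⁻¹} − ‖x−μ_i‖²_{Σ⁻¹}. Then there is an absolute constant c > 0 such that for x ~ N(μ_i, Σ), the event { Δ_{ij}(x) ≥ ρ_*²/2 for all j ≠ i } has probability at least 1 − (C−1)·exp(−c·ρ_*²). -/

import Mathlib

/-!
The statistic `Δ_ij(x) = ρ_ij² - 2 (x - μ_i)ᵀ Σ⁻¹ (μ_j - μ_i)` is affine in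
`x`, and completing the square shows that `exp (-t Δ_ij)` times the density of `N(μ_i, Σ)` is
`exp ((2t² - t) ρ_ij²)` times the density of `N(μ_i + 2t (μ_j - μ_i), Σ)`. Hence
`E exp (-t Δ_ij) = exp ((2t² - t) ρ_ij²)`, and the Chernoff bound at `t = 1/8` gives
`P(Δ_ij < ρ_*²/2) ≤ exp (ρ_*²/16 - 3ρ_ij²/32) ≤ exp (-ρ_*²/32)`. A union bound over `j ≠ i`
finishes the proof with `c = 1/32`.
-/

open MeasureTheory ProbabilityTheory Real Finset
open scoped ENNReal

noncomputable section

abbrev E (d : ℕ) := EuclideanSpace ℝ (Fin d)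

/-- Mahalanobis-type quadratic form vᵀAv. -/
def quadForm {d : ℕ} (A : Matrix (Fin d) (Fin d) ℝ) (v : E d) : ℝ :=
  ∑ a : Fin d, ∑ b : Fin d, v a * A a b * v b

/-- Gaussian measure N(ν, S) on ℝ^d for positive definite S, via its Lebesgue density. -/
def gaussianE (d : ℕ) (ν : E d) (S : Matrix (Fin d) (Fin d) ℝ) : Measure (E d) :=
  volume.withDensity fun x =>
    ENNReal.ofReal
      ((2 * π) ^ (-(d : ℝ) / 2) * S.det ^ (-(1 : ℝ) / 2) *
        Real.exp (-(1 / 2) * quadForm S⁻¹ (x - ν)))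

/-- ρ_*² = min_{i≠j} ‖μ_i − μ_j‖²_{Σ⁻¹}. -/
def rhoStarSq {d C : ℕ} (S : Matrix (Fin d) (Fin d) ℝ) (μ : Fin C → E d) : ℝ :=
  sInf ((fun p : Fin C × Fin C => quadForm S⁻¹ (μ p.1 - μ p.2)) '' {p | p.1 ≠ p.2})

open scoped MatrixOrder

lemma ofReal_one_sub_card_mul_le_measure {α ι : Type*} [MeasurableSpace α] {μ : Measure α}
    [IsProbabilityMeasure μ] (t : Finset ι) (s : ι → Set α) {ε : ℝ} (hε : 0 ≤ ε)
    (hs : ∀ j ∈ t, μ (s j) ≤ ENNReal.ofReal ε) :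
    ENNReal.ofReal (1 - #t * ε) ≤ μ {x | ∀ j ∈ t, x ∉ s j} := by
  have hcompl : {x | ∀ j ∈ t, x ∉ s j}ᶜ = ⋃ j ∈ t, s j := by
    ext x
    simp
  calc ENNReal.ofReal (1 - #t * ε) = 1 - ∑ _j ∈ t, ENNReal.ofReal ε := by
        rw [ENNReal.ofReal_sub _ (by positivity), ENNReal.ofReal_one,
          ENNReal.ofReal_mul (by positivity), ENNReal.ofReal_natCast, sum_const, nsmul_eq_mul]
    _ ≤ 1 - μ (⋃ j ∈ t, s j) :=
        tsub_le_tsub_left ((measure_biUnion_finset_le t s).trans (sum_le_sum hs)) 1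
    _ ≤ μ {x | ∀ j ∈ t, x ∉ s j} := by
        rw [← hcompl, tsub_le_iff_right, ← measure_univ (μ := μ)]
        exact measure_univ_le_add_compl _

lemma lintegral_exp_neg_half_norm_sq {V : Type*} [NormedAddCommGroup V] [InnerProductSpace ℝ V]
    [FiniteDimensional ℝ V] [MeasurableSpace V] [BorelSpace V] :
    ∫⁻ v : V, ENNReal.ofReal (exp (-(1 / 2) * ‖v‖ ^ 2)) =
      ENNReal.ofReal ((2 * π) ^ (Module.finrank ℝ V / 2 : ℝ)) := by
  have hint : Integrable fun v : V => exp (-(1 / 2) * ‖v‖ ^ 2) := by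
    refine (GaussianFourier.integrable_cexp_neg_mul_sq_norm_add (V := V)
      (b := ((1 / 2 : ℝ) : ℂ)) (by norm_num) 0 0).norm.congr (.of_forall fun v => ?_)
    simp [Complex.norm_exp, ← Complex.ofReal_pow]
  rw [← ofReal_integral_eq_lintegral_ofReal hint (.of_forall fun v => (exp_pos _).le),
    GaussianFourier.integral_rexp_neg_mul_sq_norm (by norm_num), div_div_eq_mul_div,
    div_one, mul_comm π]

lemma Matrix.det_sqrt {n : Type*} [Fintype n] [DecidableEq n] {A : Matrix n n ℝ}
    (hA : A.PosSemidef) : (CFC.sqrt A).det = √A.det := by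
  have hB : (CFC.sqrt A).PosSemidef := nonneg_iff_posSemidef.mp (CFC.sqrt_nonneg A)
  rw [← Real.sqrt_mul_self hB.det_nonneg, ← det_mul, CFC.sqrt_mul_sqrt_self A hA.nonneg]

namespace GaussianLLR

variable {d : ℕ}

open Matrix

lemma quadForm_eq_dotProduct (A : Matrix (Fin d) (Fin d) ℝ) (v : E d) :
    quadForm A v = v.ofLp ⬝ᵥ A *ᵥ v.ofLp := by
  simp only [quadForm, dotProduct, mulVec, Finset.mul_sum]
  exact Finset.sum_congr rfl fun a _ => Finset.sum_congr rfl fun b _ => by ring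

lemma continuous_quadForm (A : Matrix (Fin d) (Fin d) ℝ) : Continuous (quadForm A) := by
  unfold quadForm
  fun_prop

lemma quadForm_nonneg {A : Matrix (Fin d) (Fin d) ℝ} (hA : A.PosSemidef) (v : E d) :
    0 ≤ quadForm A v :=
  quadForm_eq_dotProduct A v ▸ hA.dotProduct_mulVec_nonneg v.ofLp

lemma quadForm_sub {A : Matrix (Fin d) (Fin d) ℝ} (hA : A.IsSymm) (u v : E d) :
    quadForm A (u - v) = quadForm A u - 2 * (u.ofLp ⬝ᵥ A *ᵥ v.ofLp) + quadForm A v := by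
  have hsymm : v.ofLp ⬝ᵥ A *ᵥ u.ofLp = u.ofLp ⬝ᵥ A *ᵥ v.ofLp := by
    rw [dotProduct_mulVec, dotProduct_comm, ← mulVec_transpose, hA.eq]
  simp only [quadForm_eq_dotProduct, WithLp.ofLp_sub, mulVec_sub, sub_dotProduct, dotProduct_sub,
    hsymm]
  ring

lemma quadForm_smul (A : Matrix (Fin d) (Fin d) ℝ) (c : ℝ) (v : E d) :
    quadForm A (c • v) = c ^ 2 * quadForm A v := by
  simp only [quadForm_eq_dotProduct, WithLp.ofLp_smul, mulVec_smul, smul_dotProduct,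
    dotProduct_smul, smul_eq_mul]
  ring

lemma quadForm_tilt {A : Matrix (Fin d) (Fin d) ℝ} (hA : A.IsSymm) (u v : E d) (t : ℝ) :
    -(1 / 2) * quadForm A u - t * (quadForm A (u - v) - quadForm A u) =
      (2 * t ^ 2 - t) * quadForm A v + -(1 / 2) * quadForm A (u - (2 * t) • v) := by
  rw [quadForm_sub hA, quadForm_sub hA, quadForm_smul, WithLp.ofLp_smul, mulVec_smul,
    dotProduct_smul, smul_eq_mul]
  ring

lemma quadForm_eq_norm_sq {A : Matrix (Fin d) (Fin d) ℝ} (hA : A.PosSemidef) (v : E d) :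
    quadForm A v = ‖toLpLin 2 2 (CFC.sqrt A) v‖ ^ 2 := by
  set B := CFC.sqrt A
  have hB : Bᵀ = B :=
    (isHermitian_iff_isSymm.mp (nonneg_iff_posSemidef.mp (CFC.sqrt_nonneg A)).isHermitian).eq
  rw [quadForm_eq_dotProduct, ← real_inner_self_eq_norm_sq,
    EuclideanSpace.inner_eq_star_dotProduct, toLpLin_apply, star_trivial, WithLp.ofLp_toLp,
    ← CFC.sqrt_mul_sqrt_self A hA.nonneg, ← mulVec_mulVec, dotProduct_mulVec,
    ← mulVec_transpose, hB, dotProduct_comm]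

lemma lintegral_exp_neg_half_quadForm {A : Matrix (Fin d) (Fin d) ℝ} (hA : A.PosDef) :
    ∫⁻ x : E d, ENNReal.ofReal (exp (-(1 / 2) * quadForm A x)) =
      ENNReal.ofReal ((2 * π) ^ (d / 2 : ℝ) / √A.det) := by
  have hdetT : LinearMap.det (toLpLin 2 2 (CFC.sqrt A)) = √A.det := by
    rw [toLpLin_eq_toLin, LinearMap.det_toLin, det_sqrt hA.posSemidef]
  set T : E d →ₗ[ℝ] E d := toLpLin 2 2 (CFC.sqrt A)
  have hdetT_pos : 0 < LinearMap.det T := hdetT ▸ Real.sqrt_pos.mpr hA.det_pos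
  have hf : Measurable fun v : E d => ENNReal.ofReal (exp (-(1 / 2) * ‖v‖ ^ 2)) := by
    fun_prop
  simp_rw [quadForm_eq_norm_sq hA.posSemidef]
  rw [← lintegral_map hf T.continuous_of_finiteDimensional.measurable,
    Measure.map_linearMap_addHaar_eq_smul_addHaar volume hdetT_pos.ne', lintegral_smul_measure,
    lintegral_exp_neg_half_norm_sq, finrank_euclideanSpace_fin, abs_of_pos (inv_pos.2 hdetT_pos),
    hdetT, smul_eq_mul, ← ENNReal.ofReal_mul (inv_nonneg.2 (Real.sqrt_nonneg _)), inv_mul_eq_div]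

def gaussianPDF (d : ℕ) (ν : E d) (S : Matrix (Fin d) (Fin d) ℝ) (x : E d) : ℝ :=
  (2 * π) ^ (-(d : ℝ) / 2) * S.det ^ (-(1 : ℝ) / 2) * exp (-(1 / 2) * quadForm S⁻¹ (x - ν))

lemma gaussianE_eq_withDensity (ν : E d) (S : Matrix (Fin d) (Fin d) ℝ) :
    gaussianE d ν S = volume.withDensity fun x => ENNReal.ofReal (gaussianPDF d ν S x) :=
  rfl

lemma gaussianPDF_nonneg {S : Matrix (Fin d) (Fin d) ℝ} (hS : S.PosDef) (ν x : E d) :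
    0 ≤ gaussianPDF d ν S x := by
  have := hS.det_pos
  unfold gaussianPDF
  positivity

lemma measurable_gaussianPDF (ν : E d) (S : Matrix (Fin d) (Fin d) ℝ) :
    Measurable (gaussianPDF d ν S) := by
  have := continuous_quadForm S⁻¹
  unfold gaussianPDF
  fun_prop

variable {S : Matrix (Fin d) (Fin d) ℝ}

lemma lintegral_gaussianPDF (hS : S.PosDef) (ν : E d) :
    ∫⁻ x, ENNReal.ofReal (gaussianPDF d ν S x) = 1 := by
  have hdet := hS.det_pos
  have hk : 0 ≤ (2 * π) ^ (-(d : ℝ) / 2) * S.det ^ (-(1 : ℝ) / 2) := by positivity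
  simp_rw [gaussianPDF, ENNReal.ofReal_mul hk]
  rw [lintegral_const_mul' _ _ ENNReal.ofReal_ne_top,
    lintegral_sub_right_eq_self (fun x => ENNReal.ofReal (exp (-(1 / 2) * quadForm S⁻¹ x))),
    lintegral_exp_neg_half_quadForm hS.inv, ← ENNReal.ofReal_mul (by positivity),
    ENNReal.ofReal_eq_one, det_nonsing_inv, Ring.inverse_eq_inv, Real.sqrt_inv,
    div_inv_eq_mul, Real.sqrt_eq_rpow, neg_div, neg_div, rpow_neg (by positivity), rpow_neg hdet.le]
  field_simp

lemma isProbabilityMeasure_gaussianE (hS : S.PosDef) (ν : E d) :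
    IsProbabilityMeasure (gaussianE d ν S) where
  measure_univ := by
    rw [gaussianE_eq_withDensity, withDensity_apply _ .univ, Measure.restrict_univ,
      lintegral_gaussianPDF hS]

lemma gaussianPDF_mul_exp_llr (hS : S.PosDef) (ν w x : E d) (t : ℝ) :
    gaussianPDF d ν S x * exp (-t * (quadForm S⁻¹ (x - w) - quadForm S⁻¹ (x - ν))) =
      exp ((2 * t ^ 2 - t) * quadForm S⁻¹ (w - ν)) * gaussianPDF d (ν + (2 * t) • (w - ν)) S x := by
  have hx : x - w = (x - ν) - (w - ν) := by abel
  rw [gaussianPDF, gaussianPDF, mul_assoc, ← exp_add, ← sub_sub, hx, neg_mul t,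
    ← sub_eq_add_neg, quadForm_tilt (isHermitian_iff_isSymm.mp hS.inv.isHermitian), exp_add]
  ring

lemma lintegral_exp_neg_mul_llr (hS : S.PosDef) (ν w : E d) (t : ℝ) :
    ∫⁻ x, ENNReal.ofReal (exp (-t * (quadForm S⁻¹ (x - w) - quadForm S⁻¹ (x - ν))))
        ∂gaussianE d ν S =
      ENNReal.ofReal (exp ((2 * t ^ 2 - t) * quadForm S⁻¹ (w - ν))) := by
  have hQ := continuous_quadForm S⁻¹
  rw [gaussianE_eq_withDensity, lintegral_withDensity_eq_lintegral_mul _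
    (measurable_gaussianPDF ν S).ennreal_ofReal (by fun_prop)]
  simp_rw [Pi.mul_apply, ← ENNReal.ofReal_mul (gaussianPDF_nonneg hS ν _),
    gaussianPDF_mul_exp_llr hS, ENNReal.ofReal_mul (exp_pos _).le]
  rw [lintegral_const_mul' _ _ ENNReal.ofReal_ne_top, lintegral_gaussianPDF hS, mul_one]

lemma gaussianE_llr_lt_le (hS : S.PosDef) (ν w : E d) {t : ℝ} (ht : 0 ≤ t) (a : ℝ) :
    gaussianE d ν S {x | quadForm S⁻¹ (x - w) - quadForm S⁻¹ (x - ν) < a} ≤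
      ENNReal.ofReal (exp (t * a + (2 * t ^ 2 - t) * quadForm S⁻¹ (w - ν))) := by
  set Δ := fun x => quadForm S⁻¹ (x - w) - quadForm S⁻¹ (x - ν)
  have hΔ : Continuous Δ := by
    have hQ := continuous_quadForm S⁻¹
    fun_prop
  calc gaussianE d ν S {x | Δ x < a}
      ≤ gaussianE d ν S
          {x | 1 ≤ ENNReal.ofReal (exp (t * a)) * ENNReal.ofReal (exp (-t * Δ x))} := by
        refine measure_mono fun x (hx : Δ x < a) => ?_
        change (1 : ℝ≥0∞) ≤ _
        rw [← ENNReal.ofReal_mul (exp_pos _).le, ← exp_add, ← ENNReal.ofReal_one]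
        exact ENNReal.ofReal_le_ofReal (one_le_exp (by nlinarith))
    _ ≤ ∫⁻ x, ENNReal.ofReal (exp (t * a)) * ENNReal.ofReal (exp (-t * Δ x)) ∂gaussianE d ν S := by
        simpa using mul_meas_ge_le_lintegral₀ (by fun_prop) 1
    _ = _ := by
        rw [lintegral_const_mul' _ _ ENNReal.ofReal_ne_top, lintegral_exp_neg_mul_llr hS,
          ← ENNReal.ofReal_mul (exp_pos _).le, ← exp_add]

lemma rhoStarSq_le {C : ℕ} (hS : S.PosDef) (μ : Fin C → E d) {i j : Fin C} (hij : i ≠ j) :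
    rhoStarSq S μ ≤ quadForm S⁻¹ (μ i - μ j) :=
  csInf_le ⟨0, by
    rintro _ ⟨p, -, rfl⟩
    exact quadForm_nonneg hS.inv.posSemidef _⟩ ⟨(i, j), hij, rfl⟩

end GaussianLLR

open GaussianLLR

/-- there is an absolute constant c > 0 such that the event
{Δ_{ij}(x) ≥ ρ_*²/2 for all j ≠ i} has probability at least 1 − (C−1)exp(−c·ρ_*²). -/
theorem llr_separation_event_probability :
    ∃ c : ℝ, 0 < c ∧
      ∀ (d C : ℕ), 1 ≤ d → 2 ≤ C →
        ∀ (S : Matrix (Fin d) (Fin d) ℝ), S.PosDef →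
          ∀ (μ : Fin C → E d), (∀ i j : Fin C, i ≠ j → μ i ≠ μ j) →
            ∀ i : Fin C,
              ENNReal.ofReal
                  (1 - ((C : ℝ) - 1) * Real.exp (-(c * rhoStarSq S μ))) ≤
                gaussianE d (μ i) S
                  {x | ∀ j : Fin C, j ≠ i →
                    rhoStarSq S μ / 2 ≤
                      quadForm S⁻¹ (x - μ j) - quadForm S⁻¹ (x - μ i)} := by
  refine ⟨1 / 32, by norm_num, fun d C _ _ S hS μ _ i => ?_⟩
  have := isProbabilityMeasure_gaussianE hS (μ i)
  set ρ := rhoStarSq S μ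
  have hbad : ∀ j ∈ univ.erase i, gaussianE d (μ i) S
      {x | quadForm S⁻¹ (x - μ j) - quadForm S⁻¹ (x - μ i) < ρ / 2} ≤
        ENNReal.ofReal (exp (-(1 / 32 * ρ))) := fun j hj =>
    (gaussianE_llr_lt_le hS (μ i) (μ j) (t := 1 / 8) (by norm_num) (ρ / 2)).trans <|
      ENNReal.ofReal_le_ofReal <| exp_le_exp.2 <| by
        linarith [rhoStarSq_le hS μ (ne_of_mem_erase hj)]
  calc ENNReal.ofReal (1 - ((C : ℝ) - 1) * exp (-(1 / 32 * ρ)))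
      = ENNReal.ofReal (1 - #(univ.erase i) * exp (-(1 / 32 * ρ))) := by
        rw [card_erase_of_mem (mem_univ i), card_univ, Fintype.card_fin, Nat.cast_pred i.pos]
    _ ≤ _ := ofReal_one_sub_card_mul_le_measure _ _ (exp_pos _).le hbad
    _ ≤ _ := by exact measure_mono fun x hx j hj => not_lt.1 (hx j (mem_erase.2 ⟨hj, mem_univ j⟩))
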